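/- The padding string ψ reconstructs the bits discarded during FS insertion (the 'full payload' lemma): let s, s_0, …, s_{l−1} ∈ {0,1}^k be keys and FS_0, …, FS_{l−1} ∈ {0,1}^{|FS|}. Define the truncated process P_0 = init_fs_payload(s), P_{i+1} = add_fs(s_i, FS_i, P_i), and the untruncated process Q_0 = init_fs_payload(s), Q_{i+1} = add_fs_full(s_i, FS_i, Q_i), where for a bit string Q of length rc + jc the untruncated insertion is add_fs_full(s, FS, Q) = MAC(h_MAC(s); T_[0..rc−k−1]) ‖ T with T = (FS ‖ Q) ⊕ (PRG0(h_PRG0(s))_[k..rc−1] ‖ 0^{(j+1)c}). Then (a) for every 0 ≤ i ≤ l, Q_i has length rc + ic and its first rc bits equal P_i (i.e., (Q_i)_[0..rc−1] = P_i); and (b) Q_l = P_l ‖ ψ, where ψ = init_fs_payload(s)_[(r−l)c..rc−1] ⊕ (⊕_{j=0}^{l−2} (PRG0(h_PRG0(s_j))_[(r−l+1+j)c..rc−1] ‖ 0^{(j+1)c})) is the padding string computed by retrieve_fses; that is, appending ψ to P_l yields exactly the payload that would have resulted had no node dropped any trailing bits before inserting its FS. -/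

import Mathlib

/-!
Both processes XOR the same keystream into `FS ‖ payload`, and XOR of bit strings truncates to the
shorter argument, so the first `rc` bits of an untruncated step depend only on the first `rc` bits
of the payload and agree with the truncated step; this gives (a) by induction. For (b), dropping
the first `(m + 1)c` bits of `Q (i + 1)` leaves
`(Q i)_[mc..end] ⊕ (PRG0 (h_PRG0 s_i)_[(m + 1)c..end] ‖ 0^{(i + 1)c})`, a recurrence along the
diagonals `m - i = const`. Unrolled from `Q 0` at `m = r - l` it produces the XOR sum `ψ`, with
one extra term `j = l - 1` that is all zeros.
-/

/-- Bit strings: finite sequences of bits. -/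
abbrev BS : Type := List Bool

/-- Bitwise XOR of (equal-length) bit strings. -/
def bxor (σ τ : BS) : BS := List.zipWith xor σ τ

/-- Substring from bit position `a` through `b` inclusive (0-indexed). -/
def substr (σ : BS) (a b : ℕ) : BS := (σ.drop a).take (b + 1 - a)

/-- All-zero string of length `a`. -/
def zeros (a : ℕ) : BS := List.replicate a false

theorem length_bxor (σ τ : BS) : (bxor σ τ).length = min σ.length τ.length :=
  List.length_zipWith

theorem take_bxor (n : ℕ) (σ τ : BS) : (bxor σ τ).take n = bxor (σ.take n) (τ.take n) :=
  List.take_zipWith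

theorem drop_bxor (n : ℕ) (σ τ : BS) : (bxor σ τ).drop n = bxor (σ.drop n) (τ.drop n) :=
  List.drop_zipWith

theorem bxor_zeros_of_length_le {σ : BS} {n : ℕ} (h : σ.length ≤ n) : bxor σ (zeros n) = σ :=
  List.ext_getElem (by simp [length_bxor, zeros, h]) fun _ _ _ => by simp [bxor, zeros]

theorem bxor_take_of_length_le {τ : BS} {n : ℕ} (h : τ.length ≤ n) (σ : BS) :
    bxor (σ.take n) τ = bxor σ τ :=
  List.ext_getElem (by simp [length_bxor]; omega) fun _ _ _ => by simp [bxor]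

theorem bxor_append_take {F G : BS} {n : ℕ} (h : G.length ≤ F.length + n) (X : BS) :
    bxor (F ++ X.take n) G = bxor (F ++ X) G := by
  rw [← bxor_take_of_length_le h (F ++ X), List.take_length_add_append]

theorem take_bxor_append (σ G Z : BS) : (bxor σ (G ++ Z)).take G.length = bxor σ G := by
  rw [take_bxor, List.take_left' rfl, bxor_take_of_length_le le_rfl]

theorem length_foldl_bxor_le (L : List ℕ) (f : ℕ → BS) (σ : BS) :
    (L.foldl (fun acc j => bxor acc (f j)) σ).length ≤ σ.length := by
  induction L generalizing σ with
  | nil => exact le_rfl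
  | cons j L ih => exact (ih _).trans (by simp [length_bxor])

theorem foldl_bxor_range_succ_of_eq_zeros {f : ℕ → BS} {σ : BS} {l n : ℕ} (hf : f l = zeros n)
    (hσ : σ.length ≤ n) :
    (List.range (l + 1)).foldl (fun acc j => bxor acc (f j)) σ =
      (List.range l).foldl (fun acc j => bxor acc (f j)) σ := by
  rw [List.range_succ, List.foldl_append, List.foldl_cons, List.foldl_nil, hf,
    bxor_zeros_of_length_le ((length_foldl_bxor_le _ _ _).trans hσ)]

theorem substr_zero (σ : BS) (b : ℕ) : substr σ 0 b = σ.take (b + 1) := by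
  simp [substr]

theorem substr_eq_drop {σ : BS} {b : ℕ} (h : σ.length ≤ b + 1) (a : ℕ) :
    substr σ a b = σ.drop a :=
  List.take_of_length_le (by simp; omega)

theorem eq_foldl_range_of_diagonal_step {α β : Type*} (op : α → β → α) (x : ℕ → ℕ → α)
    (f : ℕ → ℕ → β) {n M : ℕ}
    (h : ∀ i < n, ∀ m < M, x (i + 1) (m + 1) = op (x i m) (f i (m + 1))) :
    ∀ i ≤ n, ∀ m, m + i ≤ M →
      x i (m + i) = (List.range i).foldl (fun acc j => op acc (f j (m + 1 + j))) (x 0 m) := by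
  intro i
  induction i with
  | zero => intros; rfl
  | succ i ih =>
    intro hi m hm
    rw [← add_assoc, h i (by omega) (m + i) (by omega), ih (by omega) m (by omega),
      List.range_succ, List.foldl_append, List.foldl_cons, List.foldl_nil, add_right_comm]

/-- `add_fs` with `tag = MAC (h_MAC s)` and keystream `G = PRG0 (h_PRG0 s)_[k..end]`. Since `bxor`
truncates to its shorter argument, the trailing bits of `X` are discarded without cutting `X`. -/
def fsInsert (tag : BS → BS) (G F X : BS) : BS :=
  tag (bxor (F ++ X) G) ++ bxor (F ++ X) G

/-- `add_fs_full`, with the keystream `G` padded by the zero string `Z`. -/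
def fsInsertFull (tag : BS → BS) (G F X Z : BS) : BS :=
  tag (bxor (F ++ X) G) ++ bxor (F ++ X) (G ++ Z)

theorem fsInsert_eq {k fsl r c : ℕ} (hc : c = fsl + k) (tag : BS → BS) {g F : BS}
    (hg : g.length = r * c) (hF : F.length = fsl) (X : BS) :
    tag (bxor (F ++ substr X 0 ((r - 1) * c - 1)) (substr g k (r * c - 1)))
        ++ bxor (F ++ substr X 0 ((r - 1) * c - 1)) (substr g k (r * c - 1)) =
      fsInsert tag (g.drop k) F X := by
  have hrc : r * c - k ≤ fsl + ((r - 1) * c - 1 + 1) := by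
    rcases r with _ | r
    · simp
    · rw [Nat.add_sub_cancel, Nat.succ_mul]; omega
  rw [substr_eq_drop (σ := g) (by omega), substr_zero,
    bxor_append_take (by rw [List.length_drop, hg, hF]; omega), fsInsert]

theorem fsInsertFull_eq {k r c i : ℕ} (hc : 0 < c) (hkc : k < r * c) (tag : BS → BS) {g Q : BS}
    (hg : g.length = r * c) (hQ : Q.length = r * c + i * c) (F : BS) :
    tag (substr (bxor (F ++ Q) (substr g k (r * c - 1)
          ++ zeros (((Q.length - r * c) / c + 1) * c))) 0 (r * c - k - 1))
        ++ bxor (F ++ Q) (substr g k (r * c - 1) ++ zeros (((Q.length - r * c) / c + 1) * c)) =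
      fsInsertFull tag (g.drop k) F Q (zeros ((i + 1) * c)) := by
  have hG : (g.drop k).length = r * c - k := by rw [List.length_drop, hg]
  rw [substr_eq_drop (σ := g) (by omega), hQ, Nat.add_sub_cancel_left, Nat.mul_div_cancel _ hc,
    substr_zero, Nat.sub_add_cancel (by omega), ← hG, take_bxor_append, fsInsertFull]

section Insertion

variable {k : ℕ} {tag : BS → BS} {G F : BS}

theorem length_fsInsertFull (htag : ∀ σ, (tag σ).length = k) {X Z : BS}
    (h : F.length + X.length ≤ G.length + Z.length) :
    (fsInsertFull tag G F X Z).length = k + (F.length + X.length) := by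
  simp only [fsInsertFull, List.length_append, htag, length_bxor]
  omega

theorem take_fsInsertFull (htag : ∀ σ, (tag σ).length = k) {n : ℕ} (h : G.length ≤ F.length + n)
    {X Y : BS} (hXY : X.take n = Y) (Z : BS) :
    (fsInsertFull tag G F X Z).take (k + G.length) = fsInsert tag G F Y := by
  rw [fsInsertFull, ← htag (bxor (F ++ X) G), List.take_length_add_append, take_bxor_append,
    ← hXY, fsInsert, bxor_append_take h]

theorem drop_fsInsertFull (htag : ∀ σ, (tag σ).length = k) {m : ℕ} (h : F.length + m ≤ G.length)
    (X Z : BS) :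
    (fsInsertFull tag G F X Z).drop (k + (F.length + m)) =
      bxor (X.drop m) (G.drop (F.length + m) ++ Z) := by
  rw [fsInsertFull, ← htag (bxor (F ++ X) G), List.drop_length_add_append, drop_bxor,
    List.drop_length_add_append, List.drop_append_of_le_length h]

end Insertion

theorem length_and_take_of_fsInsertFull {k c n l : ℕ} {tag : ℕ → BS → BS} {G F P Q : ℕ → BS}
    (htag : ∀ i σ, (tag i σ).length = k) (hF : ∀ i < l, (F i).length + k = c)
    (hG : ∀ i < l, k + (G i).length = n)
    (hP : ∀ i < l, P (i + 1) = fsInsert (tag i) (G i) (F i) (P i))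
    (hQ : ∀ i < l, (Q i).length = n + i * c →
      Q (i + 1) = fsInsertFull (tag i) (G i) (F i) (Q i) (zeros ((i + 1) * c)))
    (hP0 : (P 0).length = n) (hQ0 : Q 0 = P 0) :
    ∀ i ≤ l, (Q i).length = n + i * c ∧ (Q i).take n = P i := by
  intro i
  induction i with
  | zero => intro; simp [hQ0, hP0]
  | succ i ih =>
    intro hi
    obtain ⟨hlen, htake⟩ := ih (by omega)
    have hFi := hF i hi
    have hGi := hG i hi
    rw [hQ i hi hlen, hP i hi, add_mul, one_mul]
    constructor
    · rw [length_fsInsertFull (htag i) (by simp [zeros, hlen]; omega), hlen]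
      omega
    · rw [← hGi, take_fsInsertFull (htag i) (by omega) htake]

theorem drop_eq_foldl_of_fsInsertFull {k c r l : ℕ} {tag : ℕ → BS → BS} {g F Q : ℕ → BS}
    (htag : ∀ i σ, (tag i σ).length = k) (hF : ∀ i < l, (F i).length + k = c)
    (hg : ∀ i < l, (g i).length = r * c)
    (hQ : ∀ i < l,
      Q (i + 1) = fsInsertFull (tag i) ((g i).drop k) (F i) (Q i) (zeros ((i + 1) * c)))
    (hQ0 : (Q 0).length = r * c) (hl : 1 ≤ l) (hlr : l ≤ r) :
    (Q l).drop (r * c) = (List.range (l - 1)).foldl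
      (fun acc j => bxor acc ((g j).drop ((r - l + 1 + j) * c) ++ zeros ((j + 1) * c)))
      ((Q 0).drop ((r - l) * c)) := by
  have hstep : ∀ i < l, ∀ m < r, (Q (i + 1)).drop ((m + 1) * c) =
      bxor ((Q i).drop (m * c)) ((g i).drop ((m + 1) * c) ++ zeros ((i + 1) * c)) := by
    intro i hi m hm
    have hmr : (m + 1) * c ≤ r * c := Nat.mul_le_mul_right c hm
    have hFi := hF i hi
    have hgi := hg i hi
    rw [hQ i hi, show (m + 1) * c = k + ((F i).length + m * c) by rw [add_mul]; omega,
      drop_fsInsertFull (htag i) (by rw [List.length_drop, add_mul] at *; omega), List.drop_drop]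
  have hunroll := eq_foldl_range_of_diagonal_step bxor (fun i m => (Q i).drop (m * c))
    (fun j m => (g j).drop (m * c) ++ zeros ((j + 1) * c)) hstep l le_rfl (r - l) (by omega)
  obtain ⟨l, rfl⟩ : ∃ l', l = l' + 1 := ⟨l - 1, by omega⟩
  have hlast : (g l).drop ((r - (l + 1) + 1 + l) * c) = [] :=
    List.drop_of_length_le (by rw [hg l (by omega), show r - (l + 1) + 1 + l = r by omega])
  have hQ0drop : ((Q 0).drop ((r - (l + 1)) * c)).length ≤ (l + 1) * c := by
    rw [List.length_drop, hQ0, ← Nat.sub_mul]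
    exact Nat.mul_le_mul_right _ (by omega)
  simp only [Nat.sub_add_cancel hlr] at hunroll
  rw [hunroll, foldl_bxor_range_succ_of_eq_zeros (by rw [hlast, List.nil_append]) hQ0drop,
    Nat.add_sub_cancel]

theorem fs_payload_full_payload_lemma_general
    (k fsl r l : ℕ) (hk : 1 ≤ k) (hfsl : k ≤ fsl)
    (hl1 : 1 ≤ l) (hlr : l ≤ r)
    (c : ℕ) (hc : c = fsl + k)
    (PRG0 PRG1 : BS → BS)
    (hPRG0len : ∀ x, (PRG0 x).length = r * c)
    (hPRG1len : ∀ x, (PRG1 x).length = r * c)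
    (MAC : BS → BS → BS) (hMAClen : ∀ key msg, (MAC key msg).length = k)
    (hPRG0 hPRG1 hMAC : BS → BS)
    (s : BS)
    (sk FS : ℕ → BS)
    (hFS : ∀ i, i < l → (FS i).length = fsl)
    (initFsPayload : BS → BS)
    (hinit : ∀ x, initFsPayload x = PRG1 (hPRG1 x))
    (addFs : BS → BS → BS → BS)
    (haddFs : ∀ key F P, addFs key F P =
      MAC (hMAC key)
          (bxor (F ++ substr P 0 ((r - 1) * c - 1)) (substr (PRG0 (hPRG0 key)) k (r * c - 1)))
        ++ bxor (F ++ substr P 0 ((r - 1) * c - 1)) (substr (PRG0 (hPRG0 key)) k (r * c - 1)))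
    -- the untruncated insertion: for Q of length rc + jc
    (addFsFull : BS → BS → BS → BS)
    (haddFsFull : ∀ key F (Q : BS), addFsFull key F Q =
      MAC (hMAC key)
          (substr (bxor (F ++ Q)
            (substr (PRG0 (hPRG0 key)) k (r * c - 1)
              ++ zeros (((Q.length - r * c) / c + 1) * c))) 0 (r * c - k - 1))
        ++ bxor (F ++ Q)
            (substr (PRG0 (hPRG0 key)) k (r * c - 1)
              ++ zeros (((Q.length - r * c) / c + 1) * c)))
    -- the truncated process
    (P : ℕ → BS)
    (hP0 : P 0 = initFsPayload s)
    (hPstep : ∀ i, i < l → P (i + 1) = addFs (sk i) (FS i) (P i))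
    -- the untruncated process
    (Q : ℕ → BS)
    (hQ0 : Q 0 = initFsPayload s)
    (hQstep : ∀ i, i < l → Q (i + 1) = addFsFull (sk i) (FS i) (Q i))
    -- the padding string ψ computed by retrieve_fses
    (ψ : BS)
    (hψ : ψ = (List.range (l - 1)).foldl
      (fun acc j =>
        bxor acc (substr (PRG0 (hPRG0 (sk j))) ((r - l + 1 + j) * c) (r * c - 1)
          ++ zeros ((j + 1) * c)))
      (substr (initFsPayload s) ((r - l) * c) (r * c - 1))) :
    (∀ i, i ≤ l → (Q i).length = r * c + i * c ∧ substr (Q i) 0 (r * c - 1) = P i) ∧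
      Q l = P l ++ ψ := by
  have hc0 : 0 < c := by omega
  have hkc : k < r * c := by nlinarith
  have hG : ∀ key, k + ((PRG0 (hPRG0 key)).drop k).length = r * c := by simp [hPRG0len]; omega
  have hsubstr : ∀ σ : BS, σ.length = r * c → ∀ a, substr σ a (r * c - 1) = σ.drop a :=
    fun σ hσ => substr_eq_drop (by omega)
  have hPnext : ∀ i < l, P (i + 1) =
      fsInsert (MAC (hMAC (sk i))) ((PRG0 (hPRG0 (sk i))).drop k) (FS i) (P i) :=
    fun i hi => by rw [hPstep i hi, haddFs, fsInsert_eq hc _ (hPRG0len _) (hFS i hi)]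
  have hQnext : ∀ i < l, (Q i).length = r * c + i * c → Q (i + 1) =
      fsInsertFull (MAC (hMAC (sk i))) ((PRG0 (hPRG0 (sk i))).drop k) (FS i) (Q i)
        (zeros ((i + 1) * c)) :=
    fun i hi hQi => by rw [hQstep i hi, haddFsFull, fsInsertFull_eq hc0 hkc _ (hPRG0len _) hQi]
  have hFc : ∀ i < l, (FS i).length + k = c := fun i hi => by rw [hFS i hi, hc]
  have hprefix := length_and_take_of_fsInsertFull (fun i => hMAClen (hMAC (sk i))) hFc
    (fun i _ => hG (sk i)) hPnext hQnext (by rw [hP0, hinit, hPRG1len]) (by rw [hQ0, hP0])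
  refine ⟨fun i hi => ?_, ?_⟩
  · rw [substr_zero, Nat.sub_add_cancel (by omega), (hprefix i hi).2]
    exact ⟨(hprefix i hi).1, rfl⟩
  · rw [← List.take_append_drop (r * c) (Q l), (hprefix l le_rfl).2,
      drop_eq_foldl_of_fsInsertFull (fun i => hMAClen (hMAC (sk i))) hFc (fun i _ => hPRG0len _)
        (fun i hi => hQnext i hi (hprefix i hi.le).1) (by rw [hQ0, hinit, hPRG1len]) hl1 hlr,
      hψ, hQ0, hinit]
    simp only [hsubstr _ (hPRG0len _), hsubstr _ (hPRG1len _)]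

/-- The padding string `ψ` reconstructs the bits discarded during
FS insertion (the "full payload" lemma): writing `P` for the truncated
insertion process (`add_fs`) and `Q` for the untruncated one (`add_fs_full`),
(a) for every `i ≤ l`, `Q i` has length `rc + ic` and its first `rc` bits
equal `P i`; and (b) `Q l = P l ‖ ψ` where `ψ` is the padding string computed
by `retrieve_fses`. -/
theorem fs_payload_full_payload_lemma
    (k fsl r l : ℕ) (hk : 1 ≤ k) (hfsl : k ≤ fsl) (hr : 1 ≤ r)
    (hl1 : 1 ≤ l) (hlr : l ≤ r)
    (c : ℕ) (hc : c = fsl + k)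
    (PRG0 PRG1 : BS → BS)
    (hPRG0len : ∀ x, (PRG0 x).length = r * c)
    (hPRG1len : ∀ x, (PRG1 x).length = r * c)
    (MAC : BS → BS → BS) (hMAClen : ∀ key msg, (MAC key msg).length = k)
    (hPRG0 hPRG1 hMAC : BS → BS)
    (hhPRG0len : ∀ x, (hPRG0 x).length = k)
    (hhPRG1len : ∀ x, (hPRG1 x).length = k)
    (hhMAClen : ∀ x, (hMAC x).length = k)
    (s : BS) (hslen : s.length = k)
    (sk FS : ℕ → BS)
    (hsk : ∀ i, i < l → (sk i).length = k)
    (hFS : ∀ i, i < l → (FS i).length = fsl)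
    (initFsPayload : BS → BS)
    (hinit : ∀ x, initFsPayload x = PRG1 (hPRG1 x))
    (addFs : BS → BS → BS → BS)
    (haddFs : ∀ key F P, addFs key F P =
      MAC (hMAC key)
          (bxor (F ++ substr P 0 ((r - 1) * c - 1)) (substr (PRG0 (hPRG0 key)) k (r * c - 1)))
        ++ bxor (F ++ substr P 0 ((r - 1) * c - 1)) (substr (PRG0 (hPRG0 key)) k (r * c - 1)))
    -- the untruncated insertion: for Q of length rc + jc
    (addFsFull : BS → BS → BS → BS)
    (haddFsFull : ∀ key F (Q : BS), addFsFull key F Q =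
      MAC (hMAC key)
          (substr (bxor (F ++ Q)
            (substr (PRG0 (hPRG0 key)) k (r * c - 1)
              ++ zeros (((Q.length - r * c) / c + 1) * c))) 0 (r * c - k - 1))
        ++ bxor (F ++ Q)
            (substr (PRG0 (hPRG0 key)) k (r * c - 1)
              ++ zeros (((Q.length - r * c) / c + 1) * c)))
    -- the truncated process
    (P : ℕ → BS)
    (hP0 : P 0 = initFsPayload s)
    (hPstep : ∀ i, i < l → P (i + 1) = addFs (sk i) (FS i) (P i))
    -- the untruncated process
    (Q : ℕ → BS)
    (hQ0 : Q 0 = initFsPayload s)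
    (hQstep : ∀ i, i < l → Q (i + 1) = addFsFull (sk i) (FS i) (Q i))
    -- the padding string ψ computed by retrieve_fses
    (ψ : BS)
    (hψ : ψ = (List.range (l - 1)).foldl
      (fun acc j =>
        bxor acc (substr (PRG0 (hPRG0 (sk j))) ((r - l + 1 + j) * c) (r * c - 1)
          ++ zeros ((j + 1) * c)))
      (substr (initFsPayload s) ((r - l) * c) (r * c - 1))) :
    (∀ i, i ≤ l → (Q i).length = r * c + i * c ∧ substr (Q i) 0 (r * c - 1) = P i) ∧
      Q l = P l ++ ψ :=
  fs_payload_full_payload_lemma_general k fsl r l hk hfsl hl1 hlr c hc PRG0 PRG1 hPRG0len hPRG1len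
    MAC hMAClen hPRG0 hPRG1 hMAC s sk FS hFS initFsPayload hinit addFs haddFs addFsFull haddFsFull P
    hP0 hPstep Q hQ0 hQstep ψ hψ
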